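/- Let R be a G-graded ring, g ∈ G, and P a graded ideal of R with P_g³ ≠ {0}. Then P is a g-weakly 2-absorbing ideal of R if and only if P is a g-2-absorbing ideal of R. -/
import Mathlib


variable {G R : Type*} [AddGroup G] [DecidableEq G] [Ring R]

/-- A two-sided ideal is graded if it contains all homogeneous components of its elements. -/
def IsGradedIdeal (𝒜 : G → AddSubgroup R) [GradedRing 𝒜] (P : TwoSidedIdeal R) : Prop :=
  ∀ a ∈ P, ∀ g : G, (DirectSum.decompose 𝒜 a g : R) ∈ P

/-- `P` is a `g`-2-absorbing ideal: `P` is a graded ideal with `P_g ≠ R_g`, and for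
`x, y, z ∈ R_g`, `x R_e y R_e z ⊆ P` implies `xy ∈ P` or `yz ∈ P` or `xz ∈ P`. -/
def IsG2Absorbing (𝒜 : G → AddSubgroup R) [GradedRing 𝒜] (g : G) (P : TwoSidedIdeal R) : Prop :=
  IsGradedIdeal 𝒜 P ∧ (∃ x ∈ 𝒜 g, x ∉ P) ∧
    ∀ x y z : R, x ∈ 𝒜 g → y ∈ 𝒜 g → z ∈ 𝒜 g →
      (∀ r s : R, r ∈ 𝒜 0 → s ∈ 𝒜 0 → x * r * y * s * z ∈ P) →
      x * y ∈ P ∨ y * z ∈ P ∨ x * z ∈ P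

/-- `P` is a `g`-weakly 2-absorbing ideal: `P` is a graded ideal with `P_g ≠ R_g`, and for
`x, y, z ∈ R_g`, `0 ≠ x R_e y R_e z ⊆ P` implies `xy ∈ P` or `yz ∈ P` or `xz ∈ P`. -/
def IsGWeakly2Absorbing (𝒜 : G → AddSubgroup R) [GradedRing 𝒜] (g : G)
    (P : TwoSidedIdeal R) : Prop :=
  IsGradedIdeal 𝒜 P ∧ (∃ x ∈ 𝒜 g, x ∉ P) ∧
    ∀ x y z : R, x ∈ 𝒜 g → y ∈ 𝒜 g → z ∈ 𝒜 g →
      (∃ r s : R, r ∈ 𝒜 0 ∧ s ∈ 𝒜 0 ∧ x * r * y * s * z ≠ 0) →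
      (∀ r s : R, r ∈ 𝒜 0 → s ∈ 𝒜 0 → x * r * y * s * z ∈ P) →
      x * y ∈ P ∨ y * z ∈ P ∨ x * z ∈ P

/-- `(x, y, z)` is a `g`-triple-zero of `P`: `x, y, z ∈ R_g`, `x R_e y R_e z = 0`,
`xy ∉ P`, `yz ∉ P` and `xz ∉ P`. -/
def IsGTripleZero (𝒜 : G → AddSubgroup R) (g : G) (P : TwoSidedIdeal R) (x y z : R) : Prop :=
  x ∈ 𝒜 g ∧ y ∈ 𝒜 g ∧ z ∈ 𝒜 g ∧
    (∀ r s : R, r ∈ 𝒜 0 → s ∈ 𝒜 0 → x * r * y * s * z = 0) ∧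
    x * y ∉ P ∧ y * z ∉ P ∧ x * z ∉ P

lemma triple_zero_kills (𝒜 : G → AddSubgroup R) (g : G) (P : TwoSidedIdeal R)
    (W : ∀ x y z : R, x ∈ 𝒜 g → y ∈ 𝒜 g → z ∈ 𝒜 g →
      (∃ r s : R, r ∈ 𝒜 0 ∧ s ∈ 𝒜 0 ∧ x * r * y * s * z ≠ 0) →
      (∀ r s : R, r ∈ 𝒜 0 → s ∈ 𝒜 0 → x * r * y * s * z ∈ P) →
      x * y ∈ P ∨ y * z ∈ P ∨ x * z ∈ P)
    {x y z : R} (hx : x ∈ 𝒜 g) (hy : y ∈ 𝒜 g) (hz : z ∈ 𝒜 g)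
    (h0 : ∀ r s : R, r ∈ 𝒜 0 → s ∈ 𝒜 0 → x * r * y * s * z = 0)
    (nxy : x * y ∉ P) (nyz : y * z ∉ P) (nxz : x * z ∉ P) :
    ∀ p q t : R, p ∈ P → p ∈ 𝒜 g → q ∈ P → q ∈ 𝒜 g → t ∈ P → t ∈ 𝒜 g →
      ∀ r s : R, r ∈ 𝒜 0 → s ∈ 𝒜 0 → p * r * q * s * t = 0 := by
  -- Step A : x r y s p = 0 for p ∈ P_g
  have A : ∀ p : R, p ∈ P → p ∈ 𝒜 g → ∀ r s : R, r ∈ 𝒜 0 → s ∈ 𝒜 0 →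
      x * r * y * s * p = 0 := by
    intro p hp hpg r s hr hs
    by_contra hne
    rcases W x y (z + p) hx hy (add_mem hz hpg)
      ⟨r, s, hr, hs, by rw [mul_add, h0 r s hr hs, zero_add]; exact hne⟩
      (fun r' s' hr' hs' => by
        rw [mul_add, h0 r' s' hr' hs', zero_add]
        exact P.mul_mem_left _ _ hp) with h | h | h
    · exact nxy h
    · exact nyz (by simpa [mul_add] using P.sub_mem h (P.mul_mem_left y p hp))
    · exact nxz (by simpa [mul_add] using P.sub_mem h (P.mul_mem_left x p hp))
  -- Step B : x r p s z = 0
  have B : ∀ p : R, p ∈ P → p ∈ 𝒜 g → ∀ r s : R, r ∈ 𝒜 0 → s ∈ 𝒜 0 →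
      x * r * p * s * z = 0 := by
    intro p hp hpg r s hr hs
    by_contra hne
    rcases W x (y + p) z hx (add_mem hy hpg) hz
      ⟨r, s, hr, hs, by
        rw [mul_add, add_mul, add_mul, h0 r s hr hs, zero_add]; exact hne⟩
      (fun r' s' hr' hs' => by
        rw [mul_add, add_mul, add_mul, h0 r' s' hr' hs', zero_add]
        exact P.mul_mem_right _ _ (P.mul_mem_right _ _ (P.mul_mem_left _ _ hp))) with h | h | h
    · exact nxy (by simpa [mul_add] using P.sub_mem h (P.mul_mem_left x p hp))
    · exact nyz (by simpa [add_mul] using P.sub_mem h (P.mul_mem_right p z hp))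
    · exact nxz h
  -- Step C : p r y s z = 0
  have C : ∀ p : R, p ∈ P → p ∈ 𝒜 g → ∀ r s : R, r ∈ 𝒜 0 → s ∈ 𝒜 0 →
      p * r * y * s * z = 0 := by
    intro p hp hpg r s hr hs
    by_contra hne
    rcases W (x + p) y z (add_mem hx hpg) hy hz
      ⟨r, s, hr, hs, by
        rw [add_mul, add_mul, add_mul, add_mul, h0 r s hr hs, zero_add]; exact hne⟩
      (fun r' s' hr' hs' => by
        rw [add_mul, add_mul, add_mul, add_mul, h0 r' s' hr' hs', zero_add]
        exact P.mul_mem_right _ _ (P.mul_mem_right _ _ (P.mul_mem_right _ _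
          (P.mul_mem_right _ _ hp)))) with h | h | h
    · exact nxy (by simpa [add_mul] using P.sub_mem h (P.mul_mem_right p y hp))
    · exact nyz h
    · exact nxz (by simpa [add_mul] using P.sub_mem h (P.mul_mem_right p z hp))
  -- Step D : x r p s q = 0 for p,q ∈ P_g
  have D : ∀ p q : R, p ∈ P → p ∈ 𝒜 g → q ∈ P → q ∈ 𝒜 g →
      ∀ r s : R, r ∈ 𝒜 0 → s ∈ 𝒜 0 → x * r * p * s * q = 0 := by
    intro p q hp hpg hq hqg r s hr hs
    by_contra hne
    have expand : ∀ r' s' : R, x * r' * (y + p) * s' * (z + q) =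
        x * r' * y * s' * z + x * r' * y * s' * q + x * r' * p * s' * z
          + x * r' * p * s' * q := by
      intro r' s'; simp only [mul_add, add_mul]; abel
    rcases W x (y + p) (z + q) hx (add_mem hy hpg) (add_mem hz hqg)
      ⟨r, s, hr, hs, by
        rw [expand, h0 r s hr hs, A q hq hqg r s hr hs, B p hp hpg r s hr hs]
        simpa using hne⟩
      (fun r' s' hr' hs' => by
        rw [expand, h0 r' s' hr' hs']
        refine P.add_mem (P.add_mem (P.add_mem P.zero_mem ?_) ?_) ?_
        · exact P.mul_mem_left _ _ hq
        · exact P.mul_mem_right _ _ (P.mul_mem_right _ _ (P.mul_mem_left _ _ hp))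
        · exact P.mul_mem_left _ _ hq) with h | h | h
    · exact nxy (by simpa [mul_add] using P.sub_mem h (P.mul_mem_left x p hp))
    · have h1 : y * q + p * z + p * q ∈ P :=
        P.add_mem (P.add_mem (P.mul_mem_left _ _ hq) (P.mul_mem_right _ _ hp))
          (P.mul_mem_left _ _ hq)
      have h2 : (y + p) * (z + q) - (y * q + p * z + p * q) = y * z := by
        simp only [mul_add, add_mul]; abel
      exact nyz (h2 ▸ P.sub_mem h h1)
    · exact nxz (by simpa [mul_add] using P.sub_mem h (P.mul_mem_left x q hq))
  -- Step E : p r y s q = 0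
  have E : ∀ p q : R, p ∈ P → p ∈ 𝒜 g → q ∈ P → q ∈ 𝒜 g →
      ∀ r s : R, r ∈ 𝒜 0 → s ∈ 𝒜 0 → p * r * y * s * q = 0 := by
    intro p q hp hpg hq hqg r s hr hs
    by_contra hne
    have expand : ∀ r' s' : R, (x + p) * r' * y * s' * (z + q) =
        x * r' * y * s' * z + x * r' * y * s' * q + p * r' * y * s' * z
          + p * r' * y * s' * q := by
      intro r' s'; simp only [mul_add, add_mul]; abel
    rcases W (x + p) y (z + q) (add_mem hx hpg) hy (add_mem hz hqg)
      ⟨r, s, hr, hs, by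
        rw [expand, h0 r s hr hs, A q hq hqg r s hr hs, C p hp hpg r s hr hs]
        simpa using hne⟩
      (fun r' s' hr' hs' => by
        rw [expand, h0 r' s' hr' hs']
        refine P.add_mem (P.add_mem (P.add_mem P.zero_mem ?_) ?_) ?_
        · exact P.mul_mem_left _ _ hq
        · exact P.mul_mem_right _ _ (P.mul_mem_right _ _ (P.mul_mem_right _ _
            (P.mul_mem_right _ _ hp)))
        · exact P.mul_mem_left _ _ hq) with h | h | h
    · exact nxy (by simpa [add_mul] using P.sub_mem h (P.mul_mem_right p y hp))
    · exact nyz (by simpa [mul_add] using P.sub_mem h (P.mul_mem_left y q hq))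
    · have h1 : x * q + p * z + p * q ∈ P :=
        P.add_mem (P.add_mem (P.mul_mem_left _ _ hq) (P.mul_mem_right _ _ hp))
          (P.mul_mem_left _ _ hq)
      have h2 : (x + p) * (z + q) - (x * q + p * z + p * q) = x * z := by
        simp only [mul_add, add_mul]; abel
      exact nxz (h2 ▸ P.sub_mem h h1)
  -- Step F : p r q s z = 0
  have F : ∀ p q : R, p ∈ P → p ∈ 𝒜 g → q ∈ P → q ∈ 𝒜 g →
      ∀ r s : R, r ∈ 𝒜 0 → s ∈ 𝒜 0 → p * r * q * s * z = 0 := by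
    intro p q hp hpg hq hqg r s hr hs
    by_contra hne
    have expand : ∀ r' s' : R, (x + p) * r' * (y + q) * s' * z =
        x * r' * y * s' * z + x * r' * q * s' * z + p * r' * y * s' * z
          + p * r' * q * s' * z := by
      intro r' s'; simp only [mul_add, add_mul]; abel
    rcases W (x + p) (y + q) z (add_mem hx hpg) (add_mem hy hqg) hz
      ⟨r, s, hr, hs, by
        rw [expand, h0 r s hr hs, B q hq hqg r s hr hs, C p hp hpg r s hr hs]
        simpa using hne⟩
      (fun r' s' hr' hs' => by
        rw [expand, h0 r' s' hr' hs']
        refine P.add_mem (P.add_mem (P.add_mem P.zero_mem ?_) ?_) ?_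
        · exact P.mul_mem_right _ _ (P.mul_mem_right _ _ (P.mul_mem_left _ _ hq))
        · exact P.mul_mem_right _ _ (P.mul_mem_right _ _ (P.mul_mem_right _ _
            (P.mul_mem_right _ _ hp)))
        · exact P.mul_mem_right _ _ (P.mul_mem_right _ _ (P.mul_mem_right _ _
            (P.mul_mem_right _ _ hp)))) with h | h | h
    · have h1 : x * q + p * y + p * q ∈ P :=
        P.add_mem (P.add_mem (P.mul_mem_left _ _ hq) (P.mul_mem_right _ _ hp))
          (P.mul_mem_left _ _ hq)
      have h2 : (x + p) * (y + q) - (x * q + p * y + p * q) = x * y := by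
        simp only [mul_add, add_mul]; abel
      exact nxy (h2 ▸ P.sub_mem h h1)
    · exact nyz (by simpa [add_mul] using P.sub_mem h (P.mul_mem_right q z hq))
    · exact nxz (by simpa [add_mul] using P.sub_mem h (P.mul_mem_right p z hp))
  -- Step G : the conclusion
  intro p q t hp hpg hq hqg ht htg r s hr hs
  by_contra hne
  have expand : ∀ r' s' : R, (x + p) * r' * (y + q) * s' * (z + t) =
      x * r' * y * s' * z + x * r' * y * s' * t + x * r' * q * s' * z
        + x * r' * q * s' * t + p * r' * y * s' * z + p * r' * y * s' * t
        + p * r' * q * s' * z + p * r' * q * s' * t := by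
    intro r' s'; simp only [mul_add, add_mul]; abel
  rcases W (x + p) (y + q) (z + t) (add_mem hx hpg) (add_mem hy hqg) (add_mem hz htg)
    ⟨r, s, hr, hs, by
      rw [expand, h0 r s hr hs, A t ht htg r s hr hs, B q hq hqg r s hr hs,
        D q t hq hqg ht htg r s hr hs, C p hp hpg r s hr hs,
        E p t hp hpg ht htg r s hr hs, F p q hp hpg hq hqg r s hr hs]
      simpa using hne⟩
    (fun r' s' hr' hs' => by
      rw [expand, h0 r' s' hr' hs']
      refine P.add_mem (P.add_mem (P.add_mem (P.add_mem (P.add_mem (P.add_mem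
        (P.add_mem P.zero_mem ?_) ?_) ?_) ?_) ?_) ?_) ?_
      · exact P.mul_mem_left _ _ ht
      · exact P.mul_mem_right _ _ (P.mul_mem_right _ _ (P.mul_mem_left _ _ hq))
      · exact P.mul_mem_left _ _ ht
      · exact P.mul_mem_right _ _ (P.mul_mem_right _ _ (P.mul_mem_right _ _
          (P.mul_mem_right _ _ hp)))
      · exact P.mul_mem_left _ _ ht
      · exact P.mul_mem_right _ _ (P.mul_mem_right _ _ (P.mul_mem_right _ _
          (P.mul_mem_right _ _ hp)))
      · exact P.mul_mem_left _ _ ht) with h | h | h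
  · have h1 : x * q + p * y + p * q ∈ P :=
      P.add_mem (P.add_mem (P.mul_mem_left _ _ hq) (P.mul_mem_right _ _ hp))
        (P.mul_mem_left _ _ hq)
    have h2 : (x + p) * (y + q) - (x * q + p * y + p * q) = x * y := by
      simp only [mul_add, add_mul]; abel
    exact nxy (h2 ▸ P.sub_mem h h1)
  · have h1 : y * t + q * z + q * t ∈ P :=
      P.add_mem (P.add_mem (P.mul_mem_left _ _ ht) (P.mul_mem_right _ _ hq))
        (P.mul_mem_left _ _ ht)
    have h2 : (y + q) * (z + t) - (y * t + q * z + q * t) = y * z := by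
      simp only [mul_add, add_mul]; abel
    exact nyz (h2 ▸ P.sub_mem h h1)
  · have h1 : x * t + p * z + p * t ∈ P :=
      P.add_mem (P.add_mem (P.mul_mem_left _ _ ht) (P.mul_mem_right _ _ hp))
        (P.mul_mem_left _ _ ht)
    have h2 : (x + p) * (z + t) - (x * t + p * z + p * t) = x * z := by
      simp only [mul_add, add_mul]; abel
    exact nxz (h2 ▸ P.sub_mem h h1)

/-- Theorem 4.17: if `P` is a graded ideal with `P_g³ ≠ {0}`, then `P` is `g`-weakly
2-absorbing if and only if it is `g`-2-absorbing. -/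
theorem stmt15 (𝒜 : G → AddSubgroup R) [GradedRing 𝒜] (g : G) (P : TwoSidedIdeal R)
    (hgr : IsGradedIdeal 𝒜 P)
    (h3 : ∃ p ∈ P, p ∈ 𝒜 g ∧ ∃ q ∈ P, q ∈ 𝒜 g ∧ ∃ r ∈ P, r ∈ 𝒜 g ∧ p * q * r ≠ 0) :
    IsGWeakly2Absorbing 𝒜 g P ↔ IsG2Absorbing 𝒜 g P := by
  constructor
  · rintro ⟨hg, hne, W⟩
    refine ⟨hg, hne, fun x y z hx hy hz hall => ?_⟩
    by_contra hcon
    push_neg at hcon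
    obtain ⟨nxy, nyz, nxz⟩ := hcon
    by_cases hex : ∃ r s : R, r ∈ 𝒜 0 ∧ s ∈ 𝒜 0 ∧ x * r * y * s * z ≠ 0
    · rcases W x y z hx hy hz hex hall with h | h | h
      · exact nxy h
      · exact nyz h
      · exact nxz h
    · push_neg at hex
      obtain ⟨p, hp, hpg, q, hq, hqg, t, ht, htg, hne0⟩ := h3
      refine hne0 ?_
      have := triple_zero_kills 𝒜 g P W hx hy hz hex nxy nyz nxz
        p q t hp hpg hq hqg ht htg 1 1 (SetLike.one_mem_graded 𝒜)
        (SetLike.one_mem_graded 𝒜)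
      simpa using this
  · rintro ⟨hg, hne, W⟩
    exact ⟨hg, hne, fun x y z hx hy hz _ hall => W x y z hx hy hz hall⟩
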